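/- Let c ∈ ℂ and let k ≥ 1 be an integer such that (c)_k ≠ 0 and (2c)_k ≠ 0. Then the polynomial Q_k(z) has degree exactly ⌊k/2⌋ and has ⌊k/2⌋ distinct roots in ℂ (i.e., Q_k is separable: it has no multiple roots). -/

import Mathlib

open Polynomial Finset

/-- The Gauss hypergeometric polynomial `₂F₁(-k/2, -(k-1)/2; 1-k-c; z)` as a polynomial in `z`,
of degree `⌊k/2⌋`. -/
noncomputable def hypQ (c : ℂ) (k : ℕ) : Polynomial ℂ :=
  ∑ j ∈ Finset.range (k / 2 + 1),
    Polynomial.C ((ascPochhammer ℂ j).eval (-(k : ℂ) / 2) *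
        (ascPochhammer ℂ j).eval (-((k : ℂ) - 1) / 2) /
      ((ascPochhammer ℂ j).eval (1 - (k : ℂ) - c) * (j.factorial : ℂ))) * Polynomial.X ^ j

/-!
`Q_k` is the terminating Gauss series `₂F₁(a, b; γ; z)` with `a = -k/2`, `b = -(k-1)/2`,
`γ = 1 - k - c`; as `(γ)_j ≠ 0` for `j ≤ k`, its coefficients obey the usual recurrence, so it
solves the hypergeometric equation `z(1-z)Q'' + (γ - (a+b+1)z)Q' - abQ = 0`, and its `n`-th
derivative solves the same equation with `a, b, γ` shifted by `n`.
At a point `z ∉ {0, 1}` the equation expresses `Q''(z)` through `Q(z)` and `Q'(z)`, so a double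
root there would be a root of every derivative, forcing `Q = 0`. Next, `Q(0) = 1`, and at `z = 1`
the shifted equations read `(γ - a - b - 1 - n) Q⁽ⁿ⁺¹⁾(1) = (a+n)(b+n) Q⁽ⁿ⁾(1)` where
`γ - a - b - 1 - n = -(2c + 2n + 1)/2 ≠ 0` by `(2c)_k ≠ 0`; so `Q(1) = 0` would propagate up to
the nonzero constant `Q⁽ᵐ⁾`, `m = ⌊k/2⌋`.
-/

section

variable {R : Type*} [CommRing R] [IsDomain R] {x : R} {m n : ℕ}

theorem ascPochhammer_eval_ne_zero_iff :
    (ascPochhammer R n).eval x ≠ 0 ↔ ∀ i < n, x + i ≠ 0 := by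
  rw [ne_eq, ascPochhammer_eval_eq_zero_iff]
  simp only [not_exists, not_and]
  exact forall₂_congr fun i _ =>
    not_congr ⟨fun h => by rw [h]; ring, fun h => by linear_combination h⟩

theorem ascPochhammer_eval_ne_zero_of_le (hmn : m ≤ n) (h : (ascPochhammer R n).eval x ≠ 0) :
    (ascPochhammer R m).eval x ≠ 0 :=
  ascPochhammer_eval_ne_zero_iff.2 fun i hi =>
    ascPochhammer_eval_ne_zero_iff.1 h i (hi.trans_le hmn)

end

namespace Polynomial

section

variable {R : Type*} [CommRing R]

theorem eq_zero_of_forall_isRoot_iterate_derivative [IsDomain R] [CharZero R] {p : R[X]} {z : R}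
    (h : ∀ n ≤ p.natDegree, (derivative^[n] p).IsRoot z) : p = 0 := by
  classical
  by_contra hp
  have hlt := (lt_rootMultiplicity_iff_isRoot_iterate_derivative hp).2 h
  rw [← count_roots] at hlt
  exact (hlt.trans_le ((Multiset.count_le_card _ _).trans (card_roots' p))).false

noncomputable def hypergeometricOp (a b γ : R) (p : R[X]) : R[X] :=
  (X - X ^ 2) * derivative (derivative p) + (C γ - C (a + b + 1) * X) * derivative p
    - C (a * b) * p

variable {a b γ : R} {p : R[X]}

theorem derivative_hypergeometricOp (a b γ : R) (p : R[X]) :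
    derivative (hypergeometricOp a b γ p)
      = hypergeometricOp (a + 1) (b + 1) (γ + 1) (derivative p) := by
  simp only [hypergeometricOp, derivative_mul, derivative_sub, derivative_X, derivative_X_pow,
    derivative_C, derivative_one, map_add, map_mul, Nat.cast_ofNat, C_ofNat, C_1]
  ring

theorem hypergeometricOp_iterate_derivative (h : hypergeometricOp a b γ p = 0) (n : ℕ) :
    hypergeometricOp (a + n) (b + n) (γ + n) (derivative^[n] p) = 0 := by
  induction n with
  | zero => simpa using h
  | succ n ih =>
    rw [Function.iterate_succ_apply', Nat.cast_succ, ← add_assoc, ← add_assoc, ← add_assoc,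
      ← derivative_hypergeometricOp, ih, derivative_zero]

theorem eval_hypergeometricOp (z : R) :
    (hypergeometricOp a b γ p).eval z = (z - z ^ 2) * (derivative (derivative p)).eval z
      + (γ - (a + b + 1) * z) * (derivative p).eval z - a * b * p.eval z := by
  simp [hypergeometricOp]

theorem coeff_hypergeometricOp (j : ℕ) :
    (hypergeometricOp a b γ p).coeff j
      = (j + 1) * (γ + j) * p.coeff (j + 1) - (a + j) * (b + j) * p.coeff j := by
  rcases j with _ | _ | j <;>
  simp only [hypergeometricOp, coeff_sub, coeff_add, sub_mul, pow_two, mul_assoc, coeff_C_mul,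
    coeff_X_mul, coeff_X_mul_zero, coeff_derivative] <;>
  push_cast <;> ring

end

section

variable {K : Type*} [Field K] {a b γ : K} {p : K[X]}

theorem isRoot_derivative_one_of_hypergeometricOp_eq_zero (h : hypergeometricOp a b γ p = 0)
    (hγ : a + b + 1 - γ ≠ 0) (hp : p.IsRoot 1) : (derivative p).IsRoot 1 := by
  have h1 := congrArg (eval 1) h
  rw [eval_hypergeometricOp, hp.eq_zero, eval_zero] at h1
  refine (mul_eq_zero.mp (?_ : (a + b + 1 - γ) * (derivative p).eval 1 = 0)).resolve_left hγ
  linear_combination -h1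

theorem isRoot_iterate_derivative_one_of_hypergeometricOp_eq_zero {N : ℕ}
    (h : hypergeometricOp a b γ p = 0) (hγ : (ascPochhammer K N).eval (a + b + 1 - γ) ≠ 0)
    (hp : p.IsRoot 1) : ∀ n ≤ N, (derivative^[n] p).IsRoot 1 := by
  intro n hn
  induction n with
  | zero => exact hp
  | succ n ih =>
    have hγn : (a + n) + (b + n) + 1 - (γ + n) ≠ 0 := by
      convert ascPochhammer_eval_ne_zero_iff.1 hγ n (by omega) using 1
      ring
    rw [Function.iterate_succ_apply']
    exact isRoot_derivative_one_of_hypergeometricOp_eq_zero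
      (hypergeometricOp_iterate_derivative h n) hγn (ih (by omega))

theorem isRoot_derivative_derivative_of_hypergeometricOp_eq_zero {z : K}
    (h : hypergeometricOp a b γ p = 0) (hz : z - z ^ 2 ≠ 0) (h0 : p.IsRoot z)
    (h1 : (derivative p).IsRoot z) : (derivative (derivative p)).IsRoot z := by
  have hz' := congrArg (eval z) h
  rw [eval_hypergeometricOp, h0.eq_zero, h1.eq_zero, eval_zero] at hz'
  exact (mul_eq_zero.mp (by linear_combination hz')).resolve_left hz

theorem isRoot_iterate_derivative_of_hypergeometricOp_eq_zero {z : K}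
    (h : hypergeometricOp a b γ p = 0) (hz : z - z ^ 2 ≠ 0) (h0 : p.IsRoot z)
    (h1 : (derivative p).IsRoot z) (n : ℕ) : (derivative^[n] p).IsRoot z := by
  suffices ∀ n, (derivative^[n] p).IsRoot z ∧ (derivative^[n + 1] p).IsRoot z from (this n).1
  intro n
  induction n with
  | zero => exact ⟨h0, h1⟩
  | succ n ih =>
    simp only [Function.iterate_succ_apply'] at ih ⊢
    exact ⟨ih.2, isRoot_derivative_derivative_of_hypergeometricOp_eq_zero
      (hypergeometricOp_iterate_derivative h n) hz ih.1 ih.2⟩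

variable [CharZero K]

theorem not_isRoot_one_of_hypergeometricOp_eq_zero {N : ℕ} (hp0 : p ≠ 0)
    (h : hypergeometricOp a b γ p = 0) (hN : p.natDegree ≤ N)
    (hγ : (ascPochhammer K N).eval (a + b + 1 - γ) ≠ 0) : ¬ p.IsRoot 1 := fun hp =>
  hp0 <| eq_zero_of_forall_isRoot_iterate_derivative fun n hn =>
    isRoot_iterate_derivative_one_of_hypergeometricOp_eq_zero h hγ hp n (hn.trans hN)

theorem separable_of_hypergeometricOp_eq_zero [IsAlgClosed K] (h : hypergeometricOp a b γ p = 0)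
    (h0 : ¬ p.IsRoot 0) (h1 : ¬ p.IsRoot 1) : p.Separable := by
  rw [separable_def, isCoprime_iff_aeval_ne_zero_of_isAlgClosed K K]
  refine fun z => not_and_or.mp ?_
  rintro ⟨hpz, hp'z⟩
  simp only [coe_aeval_eq_eval] at hpz hp'z
  have hp0 : p ≠ 0 := by rintro rfl; exact h0 (eval_zero (x := 0))
  have hz : z - z ^ 2 ≠ 0 := by
    intro hz
    rcases mul_eq_zero.mp (show z * (1 - z) = 0 by linear_combination hz) with rfl | hz1
    · exact h0 hpz
    · exact h1 (by rwa [sub_eq_zero.mp hz1])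
  exact hp0 <| eq_zero_of_forall_isRoot_iterate_derivative fun n _ =>
    isRoot_iterate_derivative_of_hypergeometricOp_eq_zero h hz hpz hp'z n

end

section

variable {K : Type*} [Field K] {a b γ : K} {N : ℕ}

noncomputable def hypergeometricCoeff (a b γ : K) (j : ℕ) : K :=
  (ascPochhammer K j).eval a * (ascPochhammer K j).eval b
    / ((ascPochhammer K j).eval γ * j.factorial)

noncomputable def terminatingHypergeometric (a b γ : K) (N : ℕ) : K[X] :=
  ∑ j ∈ range (N + 1), C (hypergeometricCoeff a b γ j) * X ^ j

theorem coeff_terminatingHypergeometric (j : ℕ) :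
    (terminatingHypergeometric a b γ N).coeff j
      = if j ≤ N then hypergeometricCoeff a b γ j else 0 := by
  simp [terminatingHypergeometric, coeff_X_pow]

theorem natDegree_terminatingHypergeometric (h : hypergeometricCoeff a b γ N ≠ 0) :
    (terminatingHypergeometric a b γ N).natDegree = N := by
  refine natDegree_eq_of_le_of_coeff_ne_zero ?_ (by simpa [coeff_terminatingHypergeometric])
  exact natDegree_le_iff_coeff_eq_zero.2 fun j hj => by
    simp [coeff_terminatingHypergeometric, not_le.2 (by exact_mod_cast hj : N < j)]

theorem terminatingHypergeometric_eval_zero :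
    (terminatingHypergeometric a b γ N).eval 0 = 1 := by
  simp [← coeff_zero_eq_eval_zero, coeff_terminatingHypergeometric, hypergeometricCoeff]

variable [CharZero K]

theorem hypergeometricCoeff_succ {j : ℕ} (hγ : (ascPochhammer K (j + 1)).eval γ ≠ 0) :
    (j + 1) * (γ + j) * hypergeometricCoeff a b γ (j + 1)
      = (a + j) * (b + j) * hypergeometricCoeff a b γ j := by
  rw [ascPochhammer_succ_eval, mul_ne_zero_iff] at hγ
  have hj : (j.factorial : K) ≠ 0 := Nat.cast_ne_zero.2 j.factorial_ne_zero
  simp only [hypergeometricCoeff, ascPochhammer_succ_eval, Nat.factorial_succ, Nat.cast_mul,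
    Nat.cast_succ]
  field_simp [hγ.1, hγ.2]

theorem hypergeometricOp_terminatingHypergeometric (hγ : (ascPochhammer K N).eval γ ≠ 0)
    (hab : (ascPochhammer K (N + 1)).eval a * (ascPochhammer K (N + 1)).eval b = 0) :
    hypergeometricOp a b γ (terminatingHypergeometric a b γ N) = 0 := by
  ext j
  rw [coeff_hypergeometricOp, coeff_terminatingHypergeometric, coeff_terminatingHypergeometric,
    coeff_zero]
  rcases lt_trichotomy j N with hj | rfl | hj
  · rw [if_pos (Nat.succ_le_of_lt hj), if_pos hj.le, sub_eq_zero]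
    exact_mod_cast hypergeometricCoeff_succ (ascPochhammer_eval_ne_zero_of_le hj hγ)
  · rw [if_neg (by omega), if_pos le_rfl, mul_zero, zero_sub, neg_eq_zero]
    simp only [hypergeometricCoeff, ascPochhammer_succ_eval] at hab ⊢
    rw [← mul_div_assoc, div_eq_zero_iff]
    exact Or.inl (by linear_combination hab)
  · rw [if_neg (by omega), if_neg (by omega)]
    ring

end

end Polynomial

section hypQ

variable {c : ℂ} {k : ℕ}

theorem hypQ_eq_terminatingHypergeometric (c : ℂ) (k : ℕ) :
    hypQ c k
      = terminatingHypergeometric (-(k : ℂ) / 2) (-((k : ℂ) - 1) / 2) (1 - k - c) (k / 2) :=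
  rfl

theorem ascPochhammer_eval_one_sub_sub_ne_zero (hc : (ascPochhammer ℂ k).eval c ≠ 0) :
    (ascPochhammer ℂ (k / 2)).eval (1 - k - c) ≠ 0 := by
  refine ascPochhammer_eval_ne_zero_of_le (Nat.div_le_self k 2)
    (ascPochhammer_eval_ne_zero_iff.2 fun i hi h => ?_)
  obtain ⟨n, rfl⟩ : ∃ n, k = i + 1 + n := ⟨k - (i + 1), by omega⟩
  refine ascPochhammer_eval_ne_zero_iff.1 hc n (by omega) ?_
  push_cast at h
  linear_combination -h

theorem ascPochhammer_eval_mul_eval_succ_half_eq_zero (k : ℕ) :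
    (ascPochhammer ℂ (k / 2 + 1)).eval (-(k : ℂ) / 2)
      * (ascPochhammer ℂ (k / 2 + 1)).eval (-((k : ℂ) - 1) / 2) = 0 := by
  obtain ⟨m, rfl | rfl⟩ := Nat.even_or_odd' k
  · refine mul_eq_zero_of_left ((ascPochhammer_eval_eq_zero_iff _ _).2 ⟨m, by omega, ?_⟩) _
    push_cast
    ring
  · refine mul_eq_zero_of_right _ ((ascPochhammer_eval_eq_zero_iff _ _).2 ⟨m, by omega, ?_⟩)
    push_cast
    ring

theorem hypergeometricCoeff_hypQ_ne_zero (hc : (ascPochhammer ℂ k).eval c ≠ 0) :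
    hypergeometricCoeff (-(k : ℂ) / 2) (-((k : ℂ) - 1) / 2) (1 - k - c) (k / 2) ≠ 0 := by
  have ha : (ascPochhammer ℂ (k / 2)).eval (-(k : ℂ) / 2) ≠ 0 := by
    refine ascPochhammer_eval_ne_zero_iff.2 fun i hi h => ?_
    have : k = 2 * i := by exact_mod_cast (by linear_combination -2 * h : (k : ℂ) = 2 * i)
    omega
  have hb : (ascPochhammer ℂ (k / 2)).eval (-((k : ℂ) - 1) / 2) ≠ 0 := by
    refine ascPochhammer_eval_ne_zero_iff.2 fun i hi h => ?_
    have : k = 2 * i + 1 := by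
      exact_mod_cast (by linear_combination -2 * h : (k : ℂ) = 2 * i + 1)
    omega
  have hfac : ((k / 2).factorial : ℂ) ≠ 0 := Nat.cast_ne_zero.2 (Nat.factorial_ne_zero _)
  exact div_ne_zero (mul_ne_zero ha hb)
    (mul_ne_zero (ascPochhammer_eval_one_sub_sub_ne_zero hc) hfac)

theorem natDegree_hypQ (hc : (ascPochhammer ℂ k).eval c ≠ 0) : (hypQ c k).natDegree = k / 2 :=
  natDegree_terminatingHypergeometric (hypergeometricCoeff_hypQ_ne_zero hc)

theorem hypergeometricOp_hypQ (hc : (ascPochhammer ℂ k).eval c ≠ 0) :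
    hypergeometricOp (-(k : ℂ) / 2) (-((k : ℂ) - 1) / 2) (1 - k - c) (hypQ c k) = 0 :=
  hypergeometricOp_terminatingHypergeometric (ascPochhammer_eval_one_sub_sub_ne_zero hc)
    (ascPochhammer_eval_mul_eval_succ_half_eq_zero k)

theorem not_isRoot_zero_hypQ (c : ℂ) (k : ℕ) : ¬ (hypQ c k).IsRoot 0 := by
  simp [IsRoot, hypQ_eq_terminatingHypergeometric, terminatingHypergeometric_eval_zero]

theorem not_isRoot_one_hypQ (hc : (ascPochhammer ℂ k).eval c ≠ 0)
    (h2c : (ascPochhammer ℂ k).eval (2 * c) ≠ 0) : ¬ (hypQ c k).IsRoot 1 := by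
  have hp0 : hypQ c k ≠ 0 := fun h => not_isRoot_zero_hypQ c k (by simp [h])
  refine not_isRoot_one_of_hypergeometricOp_eq_zero hp0 (hypergeometricOp_hypQ hc)
    (natDegree_hypQ hc).le (ascPochhammer_eval_ne_zero_iff.2 fun i hi h => ?_)
  refine ascPochhammer_eval_ne_zero_iff.1 h2c (2 * i + 1) (by omega) ?_
  push_cast
  linear_combination 2 * h

theorem separable_hypQ (hc : (ascPochhammer ℂ k).eval c ≠ 0)
    (h2c : (ascPochhammer ℂ k).eval (2 * c) ≠ 0) : (hypQ c k).Separable :=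
  separable_of_hypergeometricOp_eq_zero (hypergeometricOp_hypQ hc) (not_isRoot_zero_hypQ c k)
    (not_isRoot_one_hypQ hc h2c)

end hypQ

theorem stmt_5_general (c : ℂ) (k : ℕ)
    (hc : (ascPochhammer ℂ k).eval c ≠ 0)
    (h2c : (ascPochhammer ℂ k).eval (2 * c) ≠ 0) :
    (hypQ c k).natDegree = k / 2 ∧ (hypQ c k).roots.toFinset.card = k / 2 ∧
      Squarefree (hypQ c k) := by
  have hdeg := natDegree_hypQ hc
  have hsep := separable_hypQ hc h2c
  refine ⟨hdeg, ?_, PerfectField.separable_iff_squarefree.mp hsep⟩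
  rw [Multiset.toFinset_card_of_nodup (nodup_roots hsep), IsAlgClosed.card_roots_eq_natDegree,
    hdeg]

/-- `Q k` has degree exactly `⌊k/2⌋` and `⌊k/2⌋` distinct roots, i.e. it has no multiple roots. -/
theorem stmt_5 (c : ℂ) (k : ℕ) (hk : 1 ≤ k)
    (hc : (ascPochhammer ℂ k).eval c ≠ 0)
    (h2c : (ascPochhammer ℂ k).eval (2 * c) ≠ 0) :
    (hypQ c k).natDegree = k / 2 ∧ (hypQ c k).roots.toFinset.card = k / 2 ∧
      Squarefree (hypQ c k) :=
  stmt_5_general c k hc h2c
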